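/- arXiv:1109.2575 — 2 statements merged into one kernel-verified Lean document; each statement's English description precedes it below -/
import Mathlib

section
/- Let (K_n) be a nonnegative stochastic process adapted to a filtration (F_n) with K_0 deterministic, and let (p_n), (r_n) be nonnegative reals such that |E(K_{n+1}-K_n | F_n)| ≤ p_n K_n and E((K_{n+1}-K_n)^2 | F_n) ≤ r_n K_n for all n. Define I_0 = K_0 and I_n = K_n - Σ_{k=0}^{n-1} E(K_{k+1}-K_k | F_k). Then (I_n) is a martingale, and for every n: |K_n - I_n| ≤ Σ_{k=0}^{n-1} p_k q_{k+1,n-1} I_k and E((I_n - I_0)^2) ≤ K_0 Σ_{k=0}^{n-1} r_k q_{0,k-1}, where q_{ℓ,k} = Π_{i=ℓ}^{k} (1+p_i) for ℓ ≤ k and q_{k,k-1} = 1. -/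
/-!
`I` is Doob's martingale part of `K`, and `K - I` is the predictable part
`∑ E(K_{k+1} - K_k | F_k)`, which the drift bound controls pathwise by `∑ p_k K_k`. Since this
also gives `K_m ≤ I_m + ∑_{k<m} p_k K_k`, a discrete Gronwall argument turns the bound into one
in terms of `I`.

For the second moment, martingale increments are orthogonal in `L²`, so
`E(I_n - I_0)² = ∑ E(I_{k+1} - I_k)²`. Each increment is `ΔK_k - E(ΔK_k | F_k)`, whose second
moment is the mean conditional variance, at most `E(ΔK_k²) ≤ r_k E K_k`; finally the drift bound
gives `E K_{k+1} ≤ (1 + p_k) E K_k`, hence `E K_k ≤ K_0 q_{0,k-1}`.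
-/

open MeasureTheory Finset

lemma sum_mul_prod_Ico_succ (p c : ℕ → ℝ) (n : ℕ) :
    ∑ k ∈ range (n + 1), p k * (∏ i ∈ Ico (k + 1) (n + 1), (1 + p i)) * c k =
      (1 + p n) * ∑ k ∈ range n, p k * (∏ i ∈ Ico (k + 1) n, (1 + p i)) * c k + p n * c n := by
  rw [sum_range_succ, Ico_self, prod_empty, mul_sum]
  congr 1
  · refine sum_congr rfl fun k hk => ?_
    rw [prod_Ico_succ_top (mem_range.mp hk)]
    ring
  · ring

lemma sum_mul_le_sum_mul_prod_of_le_add_sum {p a c : ℕ → ℝ} (hp : ∀ k, 0 ≤ p k)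
    (h : ∀ m, a m ≤ c m + ∑ k ∈ range m, p k * a k) (n : ℕ) :
    ∑ k ∈ range n, p k * a k ≤ ∑ k ∈ range n, p k * (∏ i ∈ Ico (k + 1) n, (1 + p i)) * c k := by
  induction n with
  | zero => simp
  | succ n ih =>
    rw [sum_mul_prod_Ico_succ, sum_range_succ]
    have hpa : p n * a n ≤ p n * (c n + ∑ k ∈ range n, p k * a k) :=
      mul_le_mul_of_nonneg_left (h n) (hp n)
    have hih := mul_le_mul_of_nonneg_left ih (by linarith [hp n] : 0 ≤ 1 + p n)
    linarith

lemma le_mul_prod_of_le_one_add_mul {p a : ℕ → ℝ} (hp : ∀ k, 0 ≤ p k)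
    (h : ∀ n, a (n + 1) ≤ (1 + p n) * a n) (n : ℕ) :
    a n ≤ a 0 * ∏ i ∈ range n, (1 + p i) := by
  induction n with
  | zero => simp
  | succ n ih =>
    calc a (n + 1) ≤ (1 + p n) * a n := h n
      _ ≤ (1 + p n) * (a 0 * ∏ i ∈ range n, (1 + p i)) :=
        mul_le_mul_of_nonneg_left ih (by linarith [hp n])
      _ = a 0 * ∏ i ∈ range (n + 1), (1 + p i) := by rw [prod_range_succ]; ring

namespace MeasureTheory

variable {Ω : Type*} {m0 : MeasurableSpace Ω} {μ : Measure Ω}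

open ProbabilityTheory in
lemma integral_sq_sub_condExp_le {m : MeasurableSpace Ω} (hm : m ≤ m0) [IsFiniteMeasure μ]
    {X : Ω → ℝ} (hX : MemLp X 2 μ) :
    ∫ ω, (X ω - (μ[X | m]) ω) ^ 2 ∂μ ≤ ∫ ω, X ω ^ 2 ∂μ :=
  calc ∫ ω, (X ω - (μ[X | m]) ω) ^ 2 ∂μ = ∫ ω, (Var[X; μ | m]) ω ∂μ :=
        (integral_condExp hm).symm
    _ ≤ ∫ ω, (μ[X ^ 2 | m]) ω ∂μ :=
        integral_mono_ae integrable_condVar integrable_condExp (condVar_ae_le_condExp_sq hm hX)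
    _ = ∫ ω, X ω ^ 2 ∂μ := integral_condExp hm

variable {ℱ : Filtration ℕ m0} {f : ℕ → Ω → ℝ} {p r : ℕ → ℝ}

lemma martingalePart_add_one_sub (n : ℕ) :
    martingalePart f ℱ μ (n + 1) - martingalePart f ℱ μ n =
      f (n + 1) - f n - μ[f (n + 1) - f n | ℱ n] := by
  simp only [martingalePart, predictablePart_add_one]
  abel

lemma ae_abs_sub_martingalePart_le (hp : ∀ n, 0 ≤ p n)
    (hdrift : ∀ n, ∀ᵐ ω ∂μ, |(μ[f (n + 1) - f n | ℱ n]) ω| ≤ p n * f n ω) (n : ℕ) :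
    ∀ᵐ ω ∂μ, |f n ω - martingalePart f ℱ μ n ω| ≤
      ∑ k ∈ range n, p k * (∏ i ∈ Ico (k + 1) n, (1 + p i)) * martingalePart f ℱ μ k ω := by
  filter_upwards [ae_all_iff.mpr hdrift] with ω hω
  have hdist : ∀ m, |f m ω - martingalePart f ℱ μ m ω| ≤ ∑ k ∈ range m, p k * f k ω := by
    intro m
    simp only [martingalePart, predictablePart, Pi.sub_apply, sub_sub_cancel, Finset.sum_apply]
    exact (abs_sum_le_sum_abs _ _).trans (sum_le_sum fun k _ => hω k)
  refine (hdist n).trans (sum_mul_le_sum_mul_prod_of_le_add_sum hp (fun m => ?_) n)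
  linarith [(abs_le.mp (hdist m)).2]

lemma memLp_martingalePart {q : ENNReal} (hq : 1 ≤ q)
    (hf : ∀ n, MemLp (f n) q μ) (n : ℕ) : MemLp (martingalePart f ℱ μ n) q μ :=
  (hf n).sub (memLp_finsetSum' _ fun k _ => ((hf (k + 1)).sub (hf k)).condExp hq)

variable [IsFiniteMeasure μ]

lemma Martingale.integral_mul_sub_eq_zero (hf : Martingale f ℱ μ)
    {i j : ℕ} (hij : i ≤ j) {g : Ω → ℝ} (hg : StronglyMeasurable[ℱ i] g)
    (hgf : Integrable (g * (f j - f i)) μ) :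
    ∫ ω, g ω * (f j ω - f i ω) ∂μ = 0 := by
  have hincr : μ[f j - f i | ℱ i] =ᵐ[μ] 0 := by
    filter_upwards [condExp_sub (m := ℱ i) (hf.integrable j) (hf.integrable i),
      hf.condExp_ae_eq hij] with ω h1 h2
    rw [h1, Pi.sub_apply, h2,
      condExp_of_stronglyMeasurable (ℱ.le i) (hf.stronglyMeasurable i) (hf.integrable i)]
    simp
  calc ∫ ω, g ω * (f j ω - f i ω) ∂μ = ∫ ω, (μ[g * (f j - f i) | ℱ i]) ω ∂μ :=
        (integral_condExp (ℱ.le i)).symm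
    _ = 0 := by
      rw [integral_eq_zero_of_ae]
      filter_upwards [condExp_mul_of_stronglyMeasurable_left hg hgf
        ((hf.integrable j).sub (hf.integrable i)), hincr] with ω h1 h2
      simp [h1, h2]

lemma Martingale.integral_sq_sub_eq_sum (hf : Martingale f ℱ μ)
    (hf2 : ∀ n, MemLp (f n) 2 μ) (n : ℕ) :
    ∫ ω, (f n ω - f 0 ω) ^ 2 ∂μ = ∑ k ∈ range n, ∫ ω, (f (k + 1) ω - f k ω) ^ 2 ∂μ := by
  induction n with
  | zero => simp
  | succ n ih =>
    have hS : MemLp (f n - f 0) 2 μ := (hf2 n).sub (hf2 0)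
    have hD : MemLp (f (n + 1) - f n) 2 μ := (hf2 (n + 1)).sub (hf2 n)
    have hS2 : Integrable (fun ω => (f n ω - f 0 ω) ^ 2) μ := hS.integrable_sq
    have hD2 : Integrable (fun ω => (f (n + 1) ω - f n ω) ^ 2) μ := hD.integrable_sq
    have hSD : Integrable (fun ω => (f n ω - f 0 ω) * (f (n + 1) ω - f n ω)) μ :=
      hS.integrable_mul hD
    have hcross : ∫ ω, (f n ω - f 0 ω) * (f (n + 1) ω - f n ω) ∂μ = 0 :=
      hf.integral_mul_sub_eq_zero n.le_succ
        ((hf.stronglyMeasurable n).sub ((hf.stronglyMeasurable 0).mono (ℱ.mono n.zero_le))) hSD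
    have hexpand : ∀ ω, (f (n + 1) ω - f 0 ω) ^ 2 = (f n ω - f 0 ω) ^ 2
        + 2 * ((f n ω - f 0 ω) * (f (n + 1) ω - f n ω)) + (f (n + 1) ω - f n ω) ^ 2 :=
      fun ω => by ring
    have hS2SD : Integrable (fun ω => (f n ω - f 0 ω) ^ 2
        + 2 * ((f n ω - f 0 ω) * (f (n + 1) ω - f n ω))) μ := hS2.add (hSD.const_mul 2)
    simp_rw [hexpand]
    rw [integral_add hS2SD hD2, integral_add hS2 (hSD.const_mul 2), integral_const_mul, hcross,
      ih, sum_range_succ]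
    ring

lemma integral_add_one_le_of_abs_condExp_sub_le (hint : ∀ n, Integrable (f n) μ) {n : ℕ}
    (hdrift : ∀ᵐ ω ∂μ, |(μ[f (n + 1) - f n | ℱ n]) ω| ≤ p n * f n ω) :
    ∫ ω, f (n + 1) ω ∂μ ≤ (1 + p n) * ∫ ω, f n ω ∂μ := by
  have hincr : ∫ ω, (f (n + 1) - f n) ω ∂μ ≤ p n * ∫ ω, f n ω ∂μ := by
    rw [← integral_condExp (ℱ.le n), ← integral_const_mul]
    exact integral_mono_ae integrable_condExp ((hint n).const_mul _)
      (hdrift.mono fun ω h => (le_abs_self _).trans h)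
  rw [Pi.sub_def, integral_sub (hint (n + 1)) (hint n)] at hincr
  linarith

lemma integral_sq_martingalePart_add_one_sub_le (hf2 : ∀ n, MemLp (f n) 2 μ) {n : ℕ}
    (hvar : ∀ᵐ ω ∂μ, (μ[(fun ω => (f (n + 1) ω - f n ω) ^ 2) | ℱ n]) ω ≤ r n * f n ω) :
    ∫ ω, (martingalePart f ℱ μ (n + 1) ω - martingalePart f ℱ μ n ω) ^ 2 ∂μ ≤
      r n * ∫ ω, f n ω ∂μ := by
  have hf1 : ∀ n, Integrable (f n) μ := fun n => (hf2 n).integrable one_le_two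
  have hstep := congrFun (martingalePart_add_one_sub (ℱ := ℱ) (μ := μ) (f := f) n)
  simp only [Pi.sub_apply] at hstep
  simp_rw [hstep]
  calc _ ≤ ∫ ω, (f (n + 1) - f n) ω ^ 2 ∂μ :=
        integral_sq_sub_condExp_le (ℱ.le n) ((hf2 (n + 1)).sub (hf2 n))
    _ = ∫ ω, (μ[(fun ω => (f (n + 1) ω - f n ω) ^ 2) | ℱ n]) ω ∂μ :=
        (integral_condExp (ℱ.le n)).symm
    _ ≤ ∫ ω, r n * f n ω ∂μ := integral_mono_ae integrable_condExp ((hf1 n).const_mul _) hvar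
    _ = r n * ∫ ω, f n ω ∂μ := integral_const_mul _ _

lemma integral_sq_martingalePart_sub_le (hf : StronglyAdapted ℱ f) (hf2 : ∀ n, MemLp (f n) 2 μ)
    (hp : ∀ n, 0 ≤ p n) (hr : ∀ n, 0 ≤ r n)
    (hdrift : ∀ n, ∀ᵐ ω ∂μ, |(μ[f (n + 1) - f n | ℱ n]) ω| ≤ p n * f n ω)
    (hvar : ∀ n, ∀ᵐ ω ∂μ, (μ[(fun ω => (f (n + 1) ω - f n ω) ^ 2) | ℱ n]) ω ≤ r n * f n ω)
    (n : ℕ) :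
    ∫ ω, (martingalePart f ℱ μ n ω - martingalePart f ℱ μ 0 ω) ^ 2 ∂μ ≤
      (∫ ω, f 0 ω ∂μ) * ∑ k ∈ range n, r k * ∏ i ∈ range k, (1 + p i) := by
  have hf1 : ∀ n, Integrable (f n) μ := fun n => (hf2 n).integrable one_le_two
  have hmean : ∀ k, ∫ ω, f k ω ∂μ ≤ (∫ ω, f 0 ω ∂μ) * ∏ i ∈ range k, (1 + p i) :=
    le_mul_prod_of_le_one_add_mul hp fun k =>
      integral_add_one_le_of_abs_condExp_sub_le hf1 (hdrift k)
  rw [(martingale_martingalePart hf hf1).integral_sq_sub_eq_sum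
    (memLp_martingalePart one_le_two hf2), mul_sum]
  refine sum_le_sum fun k _ => ?_
  calc _ ≤ r k * ∫ ω, f k ω ∂μ := integral_sq_martingalePart_add_one_sub_le hf2 (hvar k)
    _ ≤ r k * ((∫ ω, f 0 ω ∂μ) * ∏ i ∈ range k, (1 + p i)) :=
        mul_le_mul_of_nonneg_left (hmean k) (hr k)
    _ = _ := by ring

end MeasureTheory

theorem stmt0_general {Ω : Type*} {m0 : MeasurableSpace Ω} {μ : Measure Ω}
    [IsProbabilityMeasure μ] (𝒢 : Filtration ℕ m0)
    (K : ℕ → Ω → ℝ) (K0 : ℝ) (p r : ℕ → ℝ)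
    (hK0 : ∀ ω, K 0 ω = K0)
    (hadapt : Adapted 𝒢 K)
    (hint : ∀ n, Integrable (K n) μ)
    (hsq : ∀ n, Integrable (fun ω => (K n ω) ^ 2) μ)
    (hp : ∀ n, 0 ≤ p n) (hr : ∀ n, 0 ≤ r n)
    (hdrift : ∀ n, ∀ᵐ ω ∂μ, |(μ[K (n + 1) - K n | 𝒢 n]) ω| ≤ p n * K n ω)
    (hvar : ∀ n, ∀ᵐ ω ∂μ,
      (μ[(fun ω => (K (n + 1) ω - K n ω) ^ 2) | 𝒢 n]) ω ≤ r n * K n ω)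
    (I : ℕ → Ω → ℝ)
    (hI : ∀ n ω, I n ω = K n ω - ∑ k ∈ Finset.range n, (μ[K (k + 1) - K k | 𝒢 k]) ω) :
    Martingale I 𝒢 μ ∧
    (∀ n, ∀ᵐ ω ∂μ, |K n ω - I n ω| ≤
        ∑ k ∈ Finset.range n, p k * (∏ i ∈ Finset.Ico (k + 1) n, (1 + p i)) * I k ω) ∧
    (∀ n, ∫ ω, (I n ω - I 0 ω) ^ 2 ∂μ ≤
        K0 * ∑ k ∈ Finset.range n, r k * ∏ i ∈ Finset.Ico 0 k, (1 + p i)) := by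
  have hI_eq : I = martingalePart K 𝒢 μ := by
    funext n ω
    simp only [hI, martingalePart, predictablePart, Pi.sub_apply, Finset.sum_apply]
  have hK2 : ∀ n, MemLp (K n) 2 μ := fun n =>
    (memLp_two_iff_integrable_sq (hint n).aestronglyMeasurable).mpr (hsq n)
  have hmean0 : ∫ ω, K 0 ω ∂μ = K0 := by simp [hK0]
  subst hI_eq
  refine ⟨martingale_martingalePart hadapt.stronglyAdapted hint,
    ae_abs_sub_martingalePart_le hp hdrift, fun n => ?_⟩
  simpa only [← range_eq_Ico, hmean0] using
    integral_sq_martingalePart_sub_le hadapt.stronglyAdapted hK2 hp hr hdrift hvar n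

/-- Lemma on martingale decomposition of a process with controlled drift and
conditional variance. -/
theorem stmt0 {Ω : Type*} {m0 : MeasurableSpace Ω} {μ : Measure Ω}
    [IsProbabilityMeasure μ] (𝒢 : Filtration ℕ m0)
    (K : ℕ → Ω → ℝ) (K0 : ℝ) (p r : ℕ → ℝ)
    (hK0 : ∀ ω, K 0 ω = K0)
    (hadapt : Adapted 𝒢 K)
    (hKnn : ∀ n ω, 0 ≤ K n ω)
    (hint : ∀ n, Integrable (K n) μ)
    (hsq : ∀ n, Integrable (fun ω => (K n ω) ^ 2) μ)
    (hp : ∀ n, 0 ≤ p n) (hr : ∀ n, 0 ≤ r n)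
    (hdrift : ∀ n, ∀ᵐ ω ∂μ, |(μ[K (n + 1) - K n | 𝒢 n]) ω| ≤ p n * K n ω)
    (hvar : ∀ n, ∀ᵐ ω ∂μ,
      (μ[(fun ω => (K (n + 1) ω - K n ω) ^ 2) | 𝒢 n]) ω ≤ r n * K n ω)
    (I : ℕ → Ω → ℝ)
    (hI : ∀ n ω, I n ω = K n ω - ∑ k ∈ Finset.range n, (μ[K (k + 1) - K k | 𝒢 k]) ω) :
    Martingale I 𝒢 μ ∧
    (∀ n, ∀ᵐ ω ∂μ, |K n ω - I n ω| ≤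
        ∑ k ∈ Finset.range n, p k * (∏ i ∈ Finset.Ico (k + 1) n, (1 + p i)) * I k ω) ∧
    (∀ n, ∫ ω, (I n ω - I 0 ω) ^ 2 ∂μ ≤
        K0 * ∑ k ∈ Finset.range n, r k * ∏ i ∈ Finset.Ico 0 k, (1 + p i)) :=
  stmt0_general 𝒢 K K0 p r hK0 hadapt hint hsq hp hr hdrift hvar I hI
end

section
/- For β > 0 with β ≠ 1, the function φ_β : (0,1) → (0,∞) defined by φ_β(t) = (1-t)^{1/(β-1)} / t^{β/(β-1)} is a bijection onto (0,∞), and there exist constants 0 < c_1 < c_2 such that its inverse satisfies c_1 (s^{1/β - 1} ∧ 1) ≤ φ_β^{-1}(s) ≤ (c_2 s^{1/β - 1}) ∧ 1 for all s > 0. -/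
/-!
With `a = s ^ (1/β - 1)`, the equation `φ_β t = s` is equivalent to the fixed-point equation
`t = a (1 - t) ^ (1/β)`. Its left side increases and its right side decreases in `t`, so it has
exactly one root in `(0, 1)`, found by the intermediate value theorem. As `(1 - t) ^ (1/β) ≤ 1`
the root is at most `a`, and when `t ≤ 1/2` it is at least `2 ^ (-1/β) a`; hence
`c₁ = 2 ^ (-1/β - 1)` and `c₂ = 1` work.
-/

open Set Real

lemma one_sub_rpow_div_rpow_eq_iff {β s t : ℝ} (hβ : 0 < β) (hβ1 : β ≠ 1) (ht : t ∈ Ioo 0 1)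
    (hs : 0 < s) :
    (1 - t) ^ (1 / (β - 1)) / t ^ (β / (β - 1)) = s ↔
      t = s ^ (1 / β - 1) * (1 - t) ^ (1 / β) := by
  have hu : 0 < 1 - t := sub_pos.2 ht.2
  have hβ1' : β - 1 ≠ 0 := sub_ne_zero.2 hβ1
  have hφ : (1 - t) ^ (1 / (β - 1)) / t ^ (β / (β - 1))
      = ((1 - t) ^ (1 / β) / t) ^ ((β - 1) / β)⁻¹ := by
    rw [div_rpow (by positivity) ht.1.le, ← rpow_mul hu.le]
    congr 2 <;> field_simp
  have hs' : s ^ ((β - 1) / β) = (s ^ (1 / β - 1))⁻¹ := by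
    rw [← rpow_neg hs.le]; congr 1; field_simp; ring
  have ha : 0 < s ^ (1 / β - 1) := by positivity
  rw [hφ, rpow_inv_eq (div_nonneg (rpow_nonneg hu.le _) ht.1.le) hs.le (div_ne_zero hβ1' hβ.ne'),
    hs', div_eq_iff ht.1.ne', eq_comm, inv_mul_eq_iff_eq_mul₀ ha.ne', eq_comm]

lemma strictMonoOn_sub_mul_one_sub_rpow {a p : ℝ} (ha : 0 ≤ a) (hp : 0 ≤ p) :
    StrictMonoOn (fun t : ℝ => t - a * (1 - t) ^ p) (Iic 1) := by
  intro x hx y hy hxy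
  have hpow : (1 - y) ^ p ≤ (1 - x) ^ p := rpow_le_rpow (sub_nonneg.2 hy) (by linarith) hp
  have := mul_le_mul_of_nonneg_left hpow ha
  simp only
  linarith

lemma eq_of_eq_mul_one_sub_rpow {a p x y : ℝ} (ha : 0 ≤ a) (hp : 0 ≤ p) (hx : x ≤ 1)
    (hy : y ≤ 1) (hxa : x = a * (1 - x) ^ p) (hya : y = a * (1 - y) ^ p) : x = y :=
  (strictMonoOn_sub_mul_one_sub_rpow ha hp).injOn hx hy (by simp only [← hxa, ← hya, sub_self])

lemma exists_mem_Ioo_eq_mul_one_sub_rpow {a p : ℝ} (ha : 0 < a) (hp : 0 < p) :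
    ∃ t ∈ Ioo (0 : ℝ) 1, t = a * (1 - t) ^ p := by
  have hcont : ContinuousOn (fun t : ℝ => t - a * (1 - t) ^ p) (Icc 0 1) :=
    continuousOn_id.sub (continuousOn_const.mul
      ((continuousOn_const.sub continuousOn_id).rpow_const fun _ _ => Or.inr hp.le))
  have hmem : (0 : ℝ) ∈ Ioo (0 - a * (1 - 0) ^ p) (1 - a * (1 - 1) ^ p) := by
    simp [zero_rpow hp.ne', ha]
  obtain ⟨t, ht, h⟩ := intermediate_value_Ioo zero_le_one hcont hmem
  exact ⟨t, ht, sub_eq_zero.1 h⟩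

lemma half_rpow_mul_min_le_of_eq_mul_one_sub_rpow {a p t : ℝ} (ha : 0 ≤ a) (hp : 0 ≤ p)
    (h : t = a * (1 - t) ^ p) : (1 / 2) ^ (p + 1) * min a 1 ≤ t := by
  have hc : (1 / 2 : ℝ) ^ (p + 1) = (1 / 2) ^ p * (1 / 2) := by
    rw [rpow_add (by norm_num), rpow_one]
  have hc1 : (1 / 2 : ℝ) ^ p ≤ 1 := rpow_le_one (by norm_num) (by norm_num) hp
  have hc0 : (0 : ℝ) ≤ (1 / 2) ^ p := by positivity
  rcases le_or_gt t (1 / 2) with hle | hgt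
  · calc (1 / 2) ^ (p + 1) * min a 1 ≤ (1 / 2) ^ p * a := by
          rw [hc]; nlinarith [min_le_left a 1, le_min ha zero_le_one]
      _ ≤ (1 - t) ^ p * a := by gcongr; linarith
      _ = t := by rw [mul_comm]; exact h.symm
  · calc (1 / 2) ^ (p + 1) * min a 1 ≤ (1 / 2) ^ p * (1 / 2) * 1 := by
          rw [hc]; gcongr; exact min_le_right a 1
      _ ≤ t := by nlinarith

lemma le_of_eq_mul_one_sub_rpow {a p t : ℝ} (ha : 0 ≤ a) (hp : 0 ≤ p) (ht : t ∈ Icc 0 1)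
    (h : t = a * (1 - t) ^ p) : t ≤ a :=
  h ▸ mul_le_of_le_one_right ha (rpow_le_one (by linarith [ht.2]) (by linarith [ht.1]) hp)

/-- The function `φ_β(t) = (1-t)^{1/(β-1)} / t^{β/(β-1)}` is a bijection from `(0,1)`
onto `(0,∞)`, and its inverse satisfies
`c₁ (s^{1/β-1} ∧ 1) ≤ φ_β⁻¹(s) ≤ (c₂ s^{1/β-1}) ∧ 1`. -/
theorem stmt2 (β : ℝ) (hβ : 0 < β) (hβ1 : β ≠ 1) :
    Set.BijOn (fun t : ℝ => (1 - t) ^ (1 / (β - 1)) / t ^ (β / (β - 1)))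
      (Set.Ioo 0 1) (Set.Ioi 0) ∧
    ∃ c₁ c₂ : ℝ, 0 < c₁ ∧ c₁ < c₂ ∧
      ∀ s : ℝ, 0 < s → ∀ t ∈ Set.Ioo (0 : ℝ) 1,
        (1 - t) ^ (1 / (β - 1)) / t ^ (β / (β - 1)) = s →
        c₁ * min (s ^ (1 / β - 1)) 1 ≤ t ∧ t ≤ min (c₂ * s ^ (1 / β - 1)) 1 := by
  have hp : 0 < 1 / β := one_div_pos.2 hβ
  have hmaps : MapsTo (fun t : ℝ => (1 - t) ^ (1 / (β - 1)) / t ^ (β / (β - 1)))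
      (Ioo 0 1) (Ioi 0) := fun t ht =>
    div_pos (rpow_pos_of_pos (sub_pos.2 ht.2) _) (rpow_pos_of_pos ht.1 _)
  refine ⟨⟨hmaps, fun x hx y hy hxy => ?_, fun s hs => ?_⟩, ?_⟩
  · have hs := hmaps hx
    exact eq_of_eq_mul_one_sub_rpow (rpow_pos_of_pos hs (1 / β - 1)).le hp.le hx.2.le hy.2.le
      ((one_sub_rpow_div_rpow_eq_iff hβ hβ1 hx hs).1 rfl)
      ((one_sub_rpow_div_rpow_eq_iff hβ hβ1 hy hs).1 hxy.symm)
  · obtain ⟨t, ht, h⟩ := exists_mem_Ioo_eq_mul_one_sub_rpow (rpow_pos_of_pos hs (1 / β - 1)) hp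
    exact ⟨t, ht, (one_sub_rpow_div_rpow_eq_iff hβ hβ1 ht hs).2 h⟩
  refine ⟨(1 / 2) ^ (1 / β + 1), 1, by positivity,
    rpow_lt_one (by norm_num) (by norm_num) (by positivity), fun s hs t ht hφ => ?_⟩
  have ha : 0 ≤ s ^ (1 / β - 1) := (rpow_pos_of_pos hs _).le
  have h := (one_sub_rpow_div_rpow_eq_iff hβ hβ1 ht hs).1 hφ
  refine ⟨half_rpow_mul_min_le_of_eq_mul_one_sub_rpow ha hp.le h, ?_⟩
  rw [one_mul]
  exact le_min (le_of_eq_mul_one_sub_rpow ha hp.le (Ioo_subset_Icc_self ht) h) ht.2.le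
end
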